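/- arXiv:2604.24238 — 2 statements merged into one kernel-verified Lean document; each statement's English description precedes it below -/
import Mathlib

section
/- Let T be a linear subspace of ℝ^n, let P denote the orthogonal projection of ℝ^n onto T and P⊥ = I − P the orthogonal projection onto its orthogonal complement. Let Y : ℝ^k → ℝ^n be a linear map and suppose there exists s > 0 such that ‖P(Yα)‖ ≥ s·‖α‖ for all α ∈ ℝ^k. Then for every u in the range of Y, s·‖P⊥ u‖ ≤ ‖P⊥ ∘ Y‖₂ · ‖u‖; equivalently, the deviation of the secant subspace S = range(Y) from T satisfies ‖P⊥ P_S‖₂ ≤ ‖P⊥ Y‖₂ / σ_min(P Y), where P_S is the orthogonal projection onto S. -/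
open ContinuousLinearMap

/-- The orthogonal projection of `ℝⁿ` onto a subspace `T`, as a continuous linear
map `ℝⁿ → ℝⁿ`. -/
noncomputable def projOn {n : ℕ} (T : Submodule ℝ (EuclideanSpace ℝ (Fin n))) :
    EuclideanSpace ℝ (Fin n) →L[ℝ] EuclideanSpace ℝ (Fin n) :=
  T.subtypeL.comp T.orthogonalProjectionOnto

/-- **Projector-deviation inequality.**
Let `P` be the orthogonal projection onto a subspace `T ⊆ ℝⁿ` and `P⊥ = I − P`.
If `Y : ℝᵏ → ℝⁿ` is linear and `‖P(Yα)‖ ≥ s‖α‖` for all `α` (with `s > 0`), then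
for every `u` in the range of `Y`, `s·‖P⊥ u‖ ≤ ‖P⊥ ∘ Y‖ · ‖u‖`. -/
theorem projector_deviation_from_secants
    {n k : ℕ} (T : Submodule ℝ (EuclideanSpace ℝ (Fin n)))
    (Y : EuclideanSpace ℝ (Fin k) →L[ℝ] EuclideanSpace ℝ (Fin n))
    (s : ℝ) (hs : 0 < s)
    (hmin : ∀ α : EuclideanSpace ℝ (Fin k), s * ‖α‖ ≤ ‖projOn T (Y α)‖) :
    ∀ u ∈ LinearMap.range (Y : EuclideanSpace ℝ (Fin k) →ₗ[ℝ] EuclideanSpace ℝ (Fin n)),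
      s * ‖(ContinuousLinearMap.id ℝ (EuclideanSpace ℝ (Fin n)) - projOn T) u‖
        ≤ ‖(ContinuousLinearMap.id ℝ (EuclideanSpace ℝ (Fin n)) - projOn T).comp Y‖ * ‖u‖ := by
  rintro u ⟨α, rfl⟩
  set Pc := (ContinuousLinearMap.id ℝ (EuclideanSpace ℝ (Fin n)) - projOn T)
  have h1 : ‖Pc (Y α)‖ ≤ ‖Pc.comp Y‖ * ‖α‖ := (Pc.comp Y).le_opNorm α
  have h2 : ‖projOn T (Y α)‖ ≤ ‖Y α‖ := by
    calc ‖projOn T (Y α)‖ = ‖T.orthogonalProjectionOnto (Y α)‖ := rfl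
    _ ≤ ‖Y α‖ := Submodule.orthogonalProjectionOnto_norm_le T |>.trans (le_refl 1) |> fun h =>
        (T.orthogonalProjectionOnto).le_of_opNorm_le h (Y α) |>.trans (by simp)
  calc s * ‖Pc (Y α)‖ ≤ s * (‖Pc.comp Y‖ * ‖α‖) := by
        exact mul_le_mul_of_nonneg_left h1 hs.le
    _ = ‖Pc.comp Y‖ * (s * ‖α‖) := by ring
    _ ≤ ‖Pc.comp Y‖ * ‖Y α‖ := by
        refine mul_le_mul_of_nonneg_left ((hmin α).trans h2) (norm_nonneg _)
end

section
/- Let T be a linear subspace of ℝ^n with orthogonal projection P onto T and P⊥ = I − P. Let Y, A : ℝ^k → ℝ^n be linear maps, and let σ, s_min > 0. Suppose ‖Aα‖ ≥ s_min·‖α‖ for all α ∈ ℝ^k and that the tangential error satisfies ‖P ∘ Y − σ·A‖₂ ≤ (1/2)·σ·s_min. Then for every u in the range of Y, ‖P⊥ u‖ ≤ (2/(σ·s_min))·‖P⊥ ∘ Y‖₂·‖u‖. -/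
lemma projOn_norm_le {n : ℕ} (T : Submodule ℝ (EuclideanSpace ℝ (Fin n)))
    (x : EuclideanSpace ℝ (Fin n)) : ‖projOn T x‖ ≤ ‖x‖ := by
  have h := T.orthogonalProjectionOnto.le_opNorm x
  calc ‖projOn T x‖ = ‖T.orthogonalProjectionOnto x‖ := rfl
    _ ≤ ‖T.orthogonalProjectionOnto‖ * ‖x‖ := h
    _ ≤ 1 * ‖x‖ := by
        exact mul_le_mul_of_nonneg_right (T.orthogonalProjectionOnto_norm_le) (norm_nonneg x)
    _ = ‖x‖ := one_mul _

/-- **Deviation of the secant subspace under a tangential-error bound.**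
Let `P` be the orthogonal projection onto `T ⊆ ℝⁿ`, `P⊥ = I − P`, and let
`Y, A : ℝᵏ → ℝⁿ` be linear, `σ, s_min > 0`. If `‖Aα‖ ≥ s_min‖α‖` for all `α`
and `‖P ∘ Y − σ·A‖ ≤ (1/2)·σ·s_min`, then for every `u` in the range of `Y`,
`‖P⊥ u‖ ≤ (2/(σ·s_min))·‖P⊥ ∘ Y‖·‖u‖`. -/
theorem secant_subspace_deviation
    {n k : ℕ} (T : Submodule ℝ (EuclideanSpace ℝ (Fin n)))
    (Y A : EuclideanSpace ℝ (Fin k) →L[ℝ] EuclideanSpace ℝ (Fin n))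
    (σ smin : ℝ) (hσ : 0 < σ) (hsmin : 0 < smin)
    (hA : ∀ α : EuclideanSpace ℝ (Fin k), smin * ‖α‖ ≤ ‖A α‖)
    (hE : ‖(projOn T).comp Y - σ • A‖ ≤ (1 / 2) * σ * smin) :
    ∀ u ∈ LinearMap.range (Y : EuclideanSpace ℝ (Fin k) →ₗ[ℝ] EuclideanSpace ℝ (Fin n)),
      ‖(ContinuousLinearMap.id ℝ (EuclideanSpace ℝ (Fin n)) - projOn T) u‖
        ≤ (2 / (σ * smin)) *
            ‖(ContinuousLinearMap.id ℝ (EuclideanSpace ℝ (Fin n)) - projOn T).comp Y‖ * ‖u‖ := by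
  rintro u ⟨α, rfl⟩
  set Q := (ContinuousLinearMap.id ℝ (EuclideanSpace ℝ (Fin n)) - projOn T)
  have hσs : 0 < σ * smin := mul_pos hσ hsmin
  -- lower bound: ‖P (Y α)‖ ≥ (1/2) σ smin ‖α‖
  have h1 : ‖((projOn T).comp Y - σ • A) α‖ ≤ (1 / 2) * σ * smin * ‖α‖ := by
    calc ‖((projOn T).comp Y - σ • A) α‖
        ≤ ‖(projOn T).comp Y - σ • A‖ * ‖α‖ := ContinuousLinearMap.le_opNorm _ _
      _ ≤ (1 / 2) * σ * smin * ‖α‖ :=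
          mul_le_mul_of_nonneg_right hE (norm_nonneg α)
  have h2 : σ * (smin * ‖α‖) ≤ ‖σ • A α‖ := by
    rw [norm_smul, Real.norm_eq_abs, abs_of_pos hσ]
    exact mul_le_mul_of_nonneg_left (hA α) hσ.le
  have h3 : (1 / 2) * (σ * smin) * ‖α‖ ≤ ‖projOn T (Y α)‖ := by
    have : ‖σ • A α‖ - ‖((projOn T).comp Y - σ • A) α‖ ≤ ‖projOn T (Y α)‖ := by
      have := norm_sub_norm_le (σ • A α) (σ • A α - projOn T (Y α))
      simp only [sub_sub_cancel] at this
      calc ‖σ • A α‖ - ‖((projOn T).comp Y - σ • A) α‖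
          = ‖σ • A α‖ - ‖σ • A α - projOn T (Y α)‖ := by
            congr 1
            rw [← norm_neg]
            congr 1
            simp [ContinuousLinearMap.sub_apply, ContinuousLinearMap.comp_apply]
        _ ≤ ‖projOn T (Y α)‖ := this
    nlinarith [h1, h2, norm_nonneg α]
  have h4 : (1 / 2) * (σ * smin) * ‖α‖ ≤ ‖Y α‖ :=
    h3.trans (projOn_norm_le T (Y α))
  have h5 : ‖α‖ ≤ (2 / (σ * smin)) * ‖Y α‖ := by
    rw [div_mul_eq_mul_div, le_div_iff₀ hσs]
    nlinarith
  have h6 : ‖Q (Y α)‖ ≤ ‖Q.comp Y‖ * ‖α‖ := Q.comp Y |>.le_opNorm α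
  have hQ : (0:ℝ) ≤ ‖Q.comp Y‖ := norm_nonneg _
  calc ‖Q (Y α)‖ ≤ ‖Q.comp Y‖ * ‖α‖ := h6
    _ ≤ ‖Q.comp Y‖ * ((2 / (σ * smin)) * ‖Y α‖) :=
        mul_le_mul_of_nonneg_left h5 hQ
    _ = (2 / (σ * smin)) * ‖Q.comp Y‖ * ‖Y α‖ := by ring
end
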